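/- arXiv:1302.5332 — 3 statements merged into one kernel-verified Lean document; each statement's English description precedes it below -/
import Mathlib

section
/- Suppose all k attributes are binary (C i = 2 for all i) and k ≥ 3. For each j : Fin k define the natural bundle b_j by: (b_j) j = none, (b_j) ((j + 1) mod k) = some 1, and (b_j) i = some 0 for every other attribute i. Then the bundles b_0, b_1, …, b_{k−1} have pairwise disjoint member sets, so {b_0, …, b_{k−1}} is an attribute hiding scheme. -/
/-- A natural bundle over `k` binary attributes: each attribute either takes a specific
value (`some a`) or is hidden (`none`). -/
abbrev Bund (k : ℕ) := Fin k → Option (Fin 2)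

/-- The set of instantiations belonging to a natural bundle. -/
def members {k : ℕ} (b : Bund k) : Finset (Fin k → Fin 2) :=
  Finset.univ.filter fun ω => ∀ i, b i = none ∨ b i = some (ω i)

/-- An attribute hiding scheme: a finite set of natural bundles with pairwise disjoint
member sets. -/
def IsScheme {k : ℕ} (O : Finset (Bund k)) : Prop :=
  ∀ b ∈ O, ∀ b' ∈ O, b ≠ b' → Disjoint (members b) (members b')

/-- The bundle `b_j`: attribute `j` is hidden, attribute `(j + 1) mod k` equals `1`, and
every other attribute equals `0`. -/
def B {k : ℕ} (j : Fin k) : Bund k := fun i =>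
  if i = j then none else if (i : ℕ) = ((j : ℕ) + 1) % k then some 1 else some 0

lemma succ_prop {k : ℕ} (hk : 3 ≤ k) (j : Fin k) :
    ((j : ℕ) + 1) % k < k ∧ ((j : ℕ) + 1) % k ≠ (j : ℕ) := by
  have hj := j.isLt
  rcases Nat.lt_or_ge ((j : ℕ) + 1) k with h | h
  · rw [Nat.mod_eq_of_lt h]; omega
  · have : (j : ℕ) + 1 = k := by omega
    rw [this, Nat.mod_self]; omega

lemma succ_inj {k : ℕ} (j j' : Fin k)
    (h : ((j : ℕ) + 1) % k = ((j' : ℕ) + 1) % k) : j = j' := by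
  have hj := j.isLt; have hj' := j'.isLt
  apply Fin.ext
  rcases Nat.lt_or_ge ((j : ℕ) + 1) k with h1 | h1 <;>
    rcases Nat.lt_or_ge ((j' : ℕ) + 1) k with h2 | h2
  · rw [Nat.mod_eq_of_lt h1, Nat.mod_eq_of_lt h2] at h; omega
  · have e : (j' : ℕ) + 1 = k := by omega
    rw [Nat.mod_eq_of_lt h1, e, Nat.mod_self] at h; omega
  · have e : (j : ℕ) + 1 = k := by omega
    rw [e, Nat.mod_self, Nat.mod_eq_of_lt h2] at h; omega
  · omega

lemma succ2_ne {k : ℕ} (hk : 3 ≤ k) (j : Fin k) :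
    (((j : ℕ) + 1) % k + 1) % k ≠ (j : ℕ) := by
  have hj := j.isLt
  rcases Nat.lt_or_ge ((j : ℕ) + 1) k with h1 | h1
  · rw [Nat.mod_eq_of_lt h1]
    rcases Nat.lt_or_ge ((j : ℕ) + 2) k with h2 | h2
    · rw [Nat.mod_eq_of_lt (by omega)]; omega
    · have e : (j : ℕ) + 1 + 1 = k := by omega
      rw [e, Nat.mod_self]; omega
  · have e : (j : ℕ) + 1 = k := by omega
    rw [e, Nat.mod_self, Nat.mod_eq_of_lt (by omega)]; omega

lemma mem_B {k : ℕ} (hk : 3 ≤ k) (j : Fin k) (ω : Fin k → Fin 2)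
    (hω : ω ∈ members (B j)) :
    (∀ i : Fin k, (i : ℕ) = ((j : ℕ) + 1) % k → ω i = 1) ∧
    (∀ i : Fin k, i ≠ j → (i : ℕ) ≠ ((j : ℕ) + 1) % k → ω i = 0) := by
  simp only [members, Finset.mem_filter, Finset.mem_univ, true_and] at hω
  constructor
  · intro i hi
    have hij : i ≠ j := by
      intro h; subst h; exact (succ_prop hk i).2 hi.symm
    have := hω i
    simp only [B, if_neg hij, if_pos hi] at this
    rcases this with h | h
    · simp at h
    · exact (Option.some.inj h).symm
  · intro i hij hi
    have := hω i
    simp only [B, if_neg hij, if_neg hi] at this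
    rcases this with h | h
    · simp at h
    · exact (Option.some.inj h).symm

/-- For `k ≥ 3` binary attributes, the bundles `b_0, …, b_{k-1}` have pairwise disjoint
member sets, so together they form an attribute hiding scheme. -/
theorem stmt8 (k : ℕ) (hk : 3 ≤ k) :
    (∀ j j' : Fin k, j ≠ j' → Disjoint (members (B j)) (members (B j'))) ∧
    IsScheme (Finset.univ.image (B (k := k))) := by
  have main : ∀ j j' : Fin k, j ≠ j' → Disjoint (members (B j)) (members (B j')) := by
    intro j j' hjj'
    rw [Finset.disjoint_left]
    intro ω h1 h2
    obtain ⟨h1a, h1b⟩ := mem_B hk j ω h1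
    obtain ⟨h2a, h2b⟩ := mem_B hk j' ω h2
    have hsne : ((j : ℕ) + 1) % k ≠ ((j' : ℕ) + 1) % k := fun h => hjj' (succ_inj j j' h)
    by_cases hc : ((j : ℕ) + 1) % k = (j' : ℕ)
    · -- use successor of j'
      set i : Fin k := ⟨((j' : ℕ) + 1) % k, (succ_prop hk j').1⟩ with hidef
      have e1 : ω i = 1 := h2a i rfl
      have e0 : ω i = 0 := by
        apply h1b i
        · intro h
          have : ((j' : ℕ) + 1) % k = (j : ℕ) := by rw [← h]
          rw [← hc] at this
          exact succ2_ne hk j this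
        · exact fun h => hsne h.symm
      rw [e1] at e0; exact absurd e0 (by decide)
    · -- use successor of j
      set i : Fin k := ⟨((j : ℕ) + 1) % k, (succ_prop hk j).1⟩ with hidef
      have e1 : ω i = 1 := h1a i rfl
      have e0 : ω i = 0 := by
        apply h2b i
        · intro h
          apply hc
          rw [← h]
        · exact hsne
      rw [e1] at e0; exact absurd e0 (by decide)
  refine ⟨main, ?_⟩
  intro b hb b' hb' hne
  simp only [Finset.mem_image, Finset.mem_univ, true_and] at hb hb'
  obtain ⟨j, rfl⟩ := hb
  obtain ⟨j', rfl⟩ := hb'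
  exact main j j' (fun h => hne (by rw [h]))
end

section
/- If there are at least three attributes (k ≥ 3) and all attributes are binary (C i = 2 for all i), then there exists an attribute hiding scheme that is not tree-structured. Concretely, let b_j (for j : Fin k) be the natural bundle with (b_j) j = none, (b_j) ((j + 1) mod k) = some 1, and (b_j) i = some 0 otherwise; then the scheme {b_0, …, b_{k−1}} is not equivalent to any tree-structured scheme, i.e., no tree-structured scheme has {b_0, …, b_{k−1}} as its set of non-unit bundles. -/
/-- `splitB b x` : the bundles obtained from `b` by revealing the hidden attribute `x`. -/
def splitB {k : ℕ} (b : Bund k) (x : Fin k) : Finset (Bund k) :=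
  Finset.univ.image fun j : Fin 2 => Function.update b x (some j)

/-- Tree-structured schemes: obtained from `{⊤}` (all attributes hidden) by recursively
splitting a bundle along one of its hidden attributes. -/
inductive IsTree (k : ℕ) : Finset (Bund k) → Prop
  | top : IsTree k {(fun _ => none : Bund k)}
  | split (O : Finset (Bund k)) (b : Bund k) (x : Fin k) :
      IsTree k O → b ∈ O → b x = none → IsTree k ((O.erase b) ∪ splitB b x)

lemma val_finRotate {n : ℕ} (i : Fin n) : (finRotate n i : ℕ) = (i + 1) % n := by
  have := i.neZero
  rw [finRotate_apply, Fin.val_add, Fin.val_one', Nat.add_mod_mod]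

lemma finRotate_apply_ne_self {n : ℕ} (hn : 2 ≤ n) (i : Fin n) : finRotate n i ≠ i :=
  Equiv.Perm.mem_support.mp (by simp [support_finRotate_of_le hn])

lemma finRotate_finRotate_ne_self {n : ℕ} (hn : 3 ≤ n) (i : Fin n) :
    finRotate n (finRotate n i) ≠ i := by
  intro h
  have hval := congrArg Fin.val h
  rw [val_finRotate, val_finRotate, Nat.mod_add_mod, add_assoc] at hval
  have hmod : (i + 2) ≡ i [MOD n] := by rw [Nat.ModEq, hval, Nat.mod_eq_of_lt i.isLt]
  have : n ∣ 2 := by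
    simpa using (Nat.modEq_iff_dvd' (Nat.le_add_right (i : ℕ) 2)).mp hmod.symm
  have := Nat.le_of_dvd two_pos this
  omega

section Bundles

variable {k : ℕ}

lemma mem_members {b : Bund k} {ω : Fin k → Fin 2} :
    ω ∈ members b ↔ ∀ i, b i = none ∨ b i = some (ω i) := by
  simp [members]

lemma eq_of_mem_members {b : Bund k} {ω : Fin k → Fin 2} {i : Fin k} {a : Fin 2}
    (hω : ω ∈ members b) (hb : b i = some a) : ω i = a := by
  simpa [hb, eq_comm] using mem_members.mp hω i

lemma apply_eq_none_of_mem_splitB {b c : Bund k} {x y : Fin k} (hc : c ∈ splitB b x)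
    (hy : c y = none) : y ≠ x ∧ b y = none := by
  obtain ⟨j, -, rfl⟩ := Finset.mem_image.mp hc
  by_cases hyx : y = x
  · simp [hyx] at hy
  · simpa [hyx] using hy

lemma IsTree.eq_top_or_exists_forall_ne_none {T : Finset (Bund k)} (hT : IsTree k T) :
    T = {fun _ => none} ∨ ∃ x, ∀ b ∈ T, b x ≠ none := by
  induction hT with
  | top => exact .inl rfl
  | split O b x _ hb _ ih =>
    refine .inr ?_
    rcases ih with rfl | ⟨x', hx'⟩
    · refine ⟨x, fun c hc hcx => ?_⟩
      rw [Finset.mem_singleton.mp hb, Finset.erase_singleton, Finset.empty_union] at hc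
      exact (apply_eq_none_of_mem_splitB hc hcx).1 rfl
    · refine ⟨x', fun c hc hcx => ?_⟩
      rcases Finset.mem_union.mp hc with hc | hc
      · exact hx' c (Finset.mem_of_mem_erase hc) hcx
      · exact hx' b hb (apply_eq_none_of_mem_splitB hc hcx).2

lemma B_apply (j i : Fin k) :
    B j i = if i = j then none else if i = finRotate k j then some 1 else some 0 := by
  simp only [B, Fin.ext_iff, val_finRotate]

lemma B_apply_self (j : Fin k) : B j j = none := by
  simp [B]

lemma B_apply_finRotate (hk : 2 ≤ k) (j : Fin k) : B j (finRotate k j) = some 1 := by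
  rw [B_apply, if_neg (finRotate_apply_ne_self hk j), if_pos rfl]

lemma B_apply_of_ne {i j : Fin k} (hij : i ≠ j) (hi : i ≠ finRotate k j) : B j i = some 0 := by
  rw [B_apply, if_neg hij, if_neg hi]

/-- At attribute `finRotate k j`, `B j` reveals `1` while `B j'` reveals `0`. -/
lemma disjoint_members_B (hk : 2 ≤ k) {j j' : Fin k} (hjj' : j ≠ j')
    (hj' : finRotate k j ≠ j') : Disjoint (members (B j)) (members (B j')) := by
  refine Finset.disjoint_left.mpr fun ω hω hω' => ?_
  have h1 := eq_of_mem_members hω (B_apply_finRotate hk j)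
  have h0 := eq_of_mem_members hω' (B_apply_of_ne hj' ((finRotate k).injective.ne hjj'))
  exact absurd (h1.symm.trans h0) (by decide)

lemma isScheme_image_B (hk : 3 ≤ k) : IsScheme (Finset.univ.image (B (k := k))) := by
  simp only [IsScheme, Finset.mem_image, Finset.mem_univ, true_and]
  rintro _ ⟨j, rfl⟩ _ ⟨j', rfl⟩ hne
  have hjj' : j ≠ j' := fun h => hne (h ▸ rfl)
  by_cases hj' : finRotate k j = j'
  · subst hj'
    exact (disjoint_members_B (by omega) hjj'.symm (finRotate_finRotate_ne_self hk j)).symm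
  · exact disjoint_members_B (by omega) hjj' hj'

end Bundles

/-- For `k ≥ 3` binary attributes, `{b_0, …, b_{k-1}}` is an attribute hiding scheme
that is not equivalent to any tree-structured scheme: no tree-structured scheme has
`{b_0, …, b_{k-1}}` as its set of non-unit bundles. -/
theorem stmt10 (k : ℕ) (hk : 3 ≤ k) :
    IsScheme (Finset.univ.image (B (k := k))) ∧
    ∀ T : Finset (Bund k), IsTree k T →
      T.filter (fun b => ∃ i, b i = none) ≠
        (Finset.univ.image (B (k := k))).filter (fun b => ∃ i, b i = none) := by
  refine ⟨isScheme_image_B hk, fun T hT hT_eq => ?_⟩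
  have hB : ∀ j, B j ∈ T := fun j => by
    have : B j ∈ (Finset.univ.image (B (k := k))).filter (fun b => ∃ i, b i = none) := by
      simpa using ⟨j, B_apply_self j⟩
    exact Finset.mem_of_mem_filter _ (hT_eq ▸ this)
  rcases hT.eq_top_or_exists_forall_ne_none with rfl | ⟨x, hx⟩
  · let j : Fin k := ⟨0, by omega⟩
    have := congrFun (Finset.mem_singleton.mp (hB j)) (finRotate k j)
    rw [B_apply_finRotate (by omega) j] at this
    exact Option.some_ne_none _ this
  · exact hx _ (hB x) (B_apply_self x)
end

section
/- Suppose all attributes are binary (C i = 2 for all i). Then the maximum of ∑_{b ∈ O} r(b) over attribute hiding schemes O in which every bundle has at most one hidden attribute equals the maximum weight of a matching in the following weighted graph: the vertices are the instantiations in Ω, two instantiations ω, ω' are joined by an edge iff they differ in exactly one coordinate, and the weight of such an edge is r(b_{ω,ω'}), where b_{ω,ω'} is the unique natural bundle whose member set is {ω, ω'}; a matching is a finite set of pairwise disjoint edges, and its weight is the sum of its edge weights. -/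
/-- The pairs of distinct bidders. -/
def pairs (n : ℕ) : Finset (Fin n × Fin n) := Finset.univ.filter fun p => p.1 ≠ p.2

theorem pairs_nonempty {n : ℕ} (hn : 2 ≤ n) : (pairs n).Nonempty := by
  refine ⟨(⟨0, by omega⟩, ⟨1, by omega⟩), ?_⟩
  simp only [pairs, Finset.mem_filter, Finset.mem_univ, true_and]
  intro h
  simpa using congrArg Fin.val h

/-- The second price of a bundle of instantiations: the max over pairs of distinct
bidders of the min of the two bidders' (additive) values for the bundle. -/
noncomputable def sp {n : ℕ} (hn : 2 ≤ n) {Ω : Type*} (v : Fin n → Ω → ℝ) (B : Finset Ω) : ℝ :=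
  (pairs n).sup' (pairs_nonempty hn) fun p => min (∑ ω ∈ B, v p.1 ω) (∑ ω ∈ B, v p.2 ω)

/-- The unit bundle of an instantiation `ω`: no attribute is hidden. -/
def unitB {k : ℕ} (ω : Fin k → Fin 2) : Bund k := fun i => some (ω i)

/-- The marginal revenue `r b`: the extra revenue obtained by selling `b` as a bundle
rather than selling its instantiations separately. -/
noncomputable def rMarg {k : ℕ} {n : ℕ} (hn : 2 ≤ n)
    (v : Fin n → (Fin k → Fin 2) → ℝ) (b : Bund k) : ℝ :=
  sp hn v (members b) - ∑ ω ∈ members b, sp hn v (members (unitB ω))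

/-- `bOf ω ω'`: for two instantiations differing in exactly one coordinate, the unique
natural bundle whose member set is `{ω, ω'}`. -/
def bOf {k : ℕ} (ω ω' : Fin k → Fin 2) : Bund k :=
  fun i => if ω i = ω' i then some (ω i) else none

/-- A matching in the graph whose vertices are the instantiations and whose edges join
instantiations differing in exactly one coordinate: a finite set of such edges (recorded
as ordered pairs) whose vertex sets are pairwise disjoint. -/
def IsMatching {k : ℕ} (M : Finset ((Fin k → Fin 2) × (Fin k → Fin 2))) : Prop :=
  (∀ p ∈ M, p.1 ≠ p.2 ∧ (Finset.univ.filter fun i => p.1 i ≠ p.2 i).card = 1) ∧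
  ∀ p ∈ M, ∀ q ∈ M, p ≠ q → Disjoint ({p.1, p.2} : Finset (Fin k → Fin 2)) {q.1, q.2}

/-! A bundle `b` with exactly one hidden attribute has exactly two members, `b.lo` and `b.hi`
(fill the hidden attribute with `0`, resp. `1`), and `b = bOf b.lo b.hi`; so such bundles are
exactly the edge bundles `b_{ω,ω'}`, and disjointness of member sets is disjointness of edges.
A bundle hiding nothing is a unit bundle, whose marginal revenue is `0`. Hence every scheme
has the same value as some matching and conversely, so the maximum over the finitely many
schemes is also the maximum over matchings. -/

open Finset

section

variable {k : ℕ}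

theorem filter_bOf_eq_none (ω ω' : Fin k → Fin 2) :
    (univ.filter fun i => bOf ω ω' i = none) = univ.filter fun i => ω i ≠ ω' i := by
  ext i
  by_cases h : ω i = ω' i <;> simp [bOf, h]

theorem bOf_self (ω : Fin k → Fin 2) : bOf ω ω = unitB ω := by
  funext i
  simp [bOf, unitB]

theorem members_unitB (ω : Fin k → Fin 2) : members (unitB ω) = {ω} := by
  ext η
  simp [members, unitB, funext_iff, eq_comm]

theorem mem_members_bOf {ω ω' η : Fin k → Fin 2} :
    η ∈ members (bOf ω ω') ↔ ∀ i, ω i = ω' i → η i = ω i := by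
  simp only [members, mem_filter, mem_univ, true_and]
  refine forall_congr' fun i => ?_
  by_cases h : ω i = ω' i <;> simp [bOf, h, eq_comm]

theorem members_bOf {ω ω' : Fin k → Fin 2}
    (h : (univ.filter fun i => ω i ≠ ω' i).card = 1) :
    members (bOf ω ω') = {ω, ω'} := by
  obtain ⟨i₀, hi₀⟩ := card_eq_one.mp h
  have hdiff : ∀ i, ω i ≠ ω' i ↔ i = i₀ := fun i => by
    simpa using congrArg (i ∈ ·) hi₀
  ext η
  rw [mem_members_bOf, mem_insert, mem_singleton]
  constructor
  · intro hη
    -- off `i₀` every member agrees with `ω` and `ω'`; at `i₀` they exhaust `Fin 2`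
    have hoff : ∀ i, i ≠ i₀ → η i = ω i ∧ ω i = ω' i := fun i hi =>
      have hωω' : ω i = ω' i := not_not.mp fun hne => hi ((hdiff i).mp hne)
      ⟨hη i hωω', hωω'⟩
    have hne : ω i₀ ≠ ω' i₀ := (hdiff i₀).mpr rfl
    by_cases hη₀ : η i₀ = ω i₀
    · left
      funext i
      by_cases hi : i = i₀
      · exact hi ▸ hη₀
      · exact (hoff i hi).1
    · right
      funext i
      by_cases hi : i = i₀
      · subst hi
        omega
      · exact (hoff i hi).1.trans (hoff i hi).2
  · rintro (rfl | rfl) i hi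
    exacts [rfl, hi.symm]

end

namespace Bund

variable {k : ℕ}

def lo (b : Bund k) : Fin k → Fin 2 := fun i => (b i).getD 0

def hi (b : Bund k) : Fin k → Fin 2 := fun i => (b i).getD 1

theorem bOf_lo_hi (b : Bund k) : bOf b.lo b.hi = b := by
  funext i
  cases hb : b i <;> simp [bOf, lo, hi, hb]

theorem filter_lo_ne_hi (b : Bund k) :
    (univ.filter fun i => b.lo i ≠ b.hi i) = univ.filter fun i => b i = none := by
  rw [← filter_bOf_eq_none, b.bOf_lo_hi]

theorem eq_unitB_lo {b : Bund k} (h : (univ.filter fun i => b i = none).card = 0) :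
    b = unitB b.lo := by
  have hlohi : b.lo = b.hi := by
    funext i
    by_contra hne
    rw [← b.filter_lo_ne_hi, card_eq_zero, filter_eq_empty_iff] at h
    exact h (mem_univ i) hne
  calc b = bOf b.lo b.hi := b.bOf_lo_hi.symm
    _ = unitB b.lo := by rw [← hlohi, bOf_self]

theorem members_eq_lo_hi {b : Bund k} (h : (univ.filter fun i => b i = none).card = 1) :
    members b = {b.lo, b.hi} := by
  rw [← members_bOf (b.filter_lo_ne_hi ▸ h), b.bOf_lo_hi]

end Bund

section

variable {k : ℕ}

theorem IsMatching.exists_isScheme_sum_eq {M : Finset ((Fin k → Fin 2) × (Fin k → Fin 2))}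
    (hM : IsMatching M) (w : Bund k → ℝ) :
    ∃ O : Finset (Bund k), IsScheme O ∧
      (∀ b ∈ O, (univ.filter fun i => b i = none).card ≤ 1) ∧
      ∑ b ∈ O, w b = ∑ p ∈ M, w (bOf p.1 p.2) := by
  have hmem : ∀ p ∈ M, members (bOf p.1 p.2) = {p.1, p.2} := fun p hp =>
    members_bOf (hM.1 p hp).2
  have hinj : Set.InjOn (fun p : (Fin k → Fin 2) × (Fin k → Fin 2) => bOf p.1 p.2) M := by
    intro p hp q hq (hpq : bOf p.1 p.2 = bOf q.1 q.2)
    by_contra hne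
    have hdisj := hM.2 p hp q hq hne
    rw [← hmem p hp, ← hmem q hq, hpq, disjoint_self, hmem q hq] at hdisj
    exact insert_ne_empty _ _ hdisj
  refine ⟨M.image fun p => bOf p.1 p.2, ?_, ?_, sum_image hinj⟩
  · simp only [IsScheme, mem_image]
    rintro _ ⟨p, hp, rfl⟩ _ ⟨q, hq, rfl⟩ hne
    rw [hmem p hp, hmem q hq]
    exact hM.2 p hp q hq (fun h => hne (by rw [h]))
  · simp only [mem_image]
    rintro _ ⟨p, hp, rfl⟩
    rw [filter_bOf_eq_none, (hM.1 p hp).2]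

theorem IsScheme.exists_isMatching_sum_eq {O : Finset (Bund k)} (hO : IsScheme O)
    (hhidden : ∀ b ∈ O, (univ.filter fun i => b i = none).card ≤ 1)
    (w : Bund k → ℝ) (hw : ∀ ω, w (unitB ω) = 0) :
    ∃ M : Finset ((Fin k → Fin 2) × (Fin k → Fin 2)), IsMatching M ∧
      ∑ p ∈ M, w (bOf p.1 p.2) = ∑ b ∈ O, w b := by
  set O₁ := O.filter fun b => (univ.filter fun i => b i = none).card = 1
  have hO₁ : ∀ b ∈ O₁, (univ.filter fun i => b.lo i ≠ b.hi i).card = 1 := fun b hb => by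
    rw [b.filter_lo_ne_hi]
    exact (mem_filter.mp hb).2
  have hinj : Set.InjOn (fun b : Bund k => (b.lo, b.hi)) O₁ := fun b _ b' _ h => by
    obtain ⟨hlo, hhi⟩ := Prod.mk.inj h
    rw [← b.bOf_lo_hi, ← b'.bOf_lo_hi, hlo, hhi]
  refine ⟨O₁.image fun b => (b.lo, b.hi), ⟨?_, ?_⟩, ?_⟩
  · simp only [mem_image]
    rintro _ ⟨b, hb, rfl⟩
    refine ⟨fun (h : b.lo = b.hi) => ?_, hO₁ b hb⟩
    simpa [h] using hO₁ b hb
  · simp only [mem_image]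
    rintro _ ⟨b, hb, rfl⟩ _ ⟨b', hb', rfl⟩ hne
    rw [← Bund.members_eq_lo_hi (mem_filter.mp hb).2,
      ← Bund.members_eq_lo_hi (mem_filter.mp hb').2]
    exact hO b (mem_filter.mp hb).1 b' (mem_filter.mp hb').1 (fun h => hne (by rw [h]))
  · rw [sum_image hinj]
    simp only [Bund.bOf_lo_hi]
    refine sum_subset (filter_subset _ _) fun b hb hb₁ => ?_
    have hcard : (univ.filter fun i => b i = none).card = 0 := by
      have := hhidden b hb
      have : (univ.filter fun i => b i = none).card ≠ 1 := fun h =>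
        hb₁ (mem_filter.mpr ⟨hb, h⟩)
      omega
    rw [Bund.eq_unitB_lo hcard, hw]

end

theorem rMarg_unitB {k n : ℕ} (hn : 2 ≤ n) (v : Fin n → (Fin k → Fin 2) → ℝ)
    (ω : Fin k → Fin 2) : rMarg hn v (unitB ω) = 0 := by
  simp [rMarg, members_unitB]

/-- For binary attributes, the maximum of `∑_{b ∈ O} r b` over attribute hiding schemes
in which every bundle has at most one hidden attribute equals the maximum weight of a
matching, where the edge between instantiations `ω, ω'` differing in exactly one
coordinate has weight `r (b_{ω,ω'})`. -/
theorem stmt14 (k : ℕ) (n : ℕ) (hn : 2 ≤ n) (v : Fin n → (Fin k → Fin 2) → ℝ) :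
    ∃ x : ℝ,
      ((∃ O : Finset (Bund k), IsScheme O ∧
          (∀ b ∈ O, (Finset.univ.filter fun i => b i = none).card ≤ 1) ∧
          ∑ b ∈ O, rMarg hn v b = x) ∧
        (∀ O : Finset (Bund k), IsScheme O →
          (∀ b ∈ O, (Finset.univ.filter fun i => b i = none).card ≤ 1) →
          ∑ b ∈ O, rMarg hn v b ≤ x)) ∧
      ((∃ M : Finset ((Fin k → Fin 2) × (Fin k → Fin 2)), IsMatching M ∧
          ∑ p ∈ M, rMarg hn v (bOf p.1 p.2) = x) ∧
        (∀ M : Finset ((Fin k → Fin 2) × (Fin k → Fin 2)), IsMatching M →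
          ∑ p ∈ M, rMarg hn v (bOf p.1 p.2) ≤ x)) := by
  classical
  obtain ⟨O₀, hO₀, hmax⟩ := exists_max_image
    (univ.filter fun O : Finset (Bund k) =>
      IsScheme O ∧ ∀ b ∈ O, (univ.filter fun i => b i = none).card ≤ 1)
    (fun O => ∑ b ∈ O, rMarg hn v b)
    ⟨∅, mem_filter.mpr ⟨mem_univ _, by simp [IsScheme], by simp⟩⟩
  simp only [mem_filter, mem_univ, true_and] at hO₀ hmax
  obtain ⟨M₀, hM₀, hM₀sum⟩ := hO₀.1.exists_isMatching_sum_eq hO₀.2 _ (rMarg_unitB hn v)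
  refine ⟨_, ⟨⟨O₀, hO₀.1, hO₀.2, rfl⟩, fun O hO hO₁ => hmax O ⟨hO, hO₁⟩⟩,
    ⟨M₀, hM₀, hM₀sum⟩, fun M hM => ?_⟩
  obtain ⟨O, hO, hO₁, hOsum⟩ := hM.exists_isScheme_sum_eq (rMarg hn v)
  exact hOsum ▸ hmax O ⟨hO, hO₁⟩
end
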